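/- arXiv:1710.00374 — 2 statements merged into one kernel-verified Lean document; each statement's English description precedes it below -/
import Mathlib

section
/- Let ℓ ≥ 2 and let 𝓕 be a finite family of (0,1)-matrices. Then there is a constant c such that for every m ≥ 1, forb(m, 3, (𝒯_ℓ(3) \ 𝒯_ℓ(2)) ∪ {T_ℓ(0,2,1)} ∪ 𝓕) ≤ c · forbmax(m, 𝓕). -/
/-- A matrix with natural number entries, of size `k × p`. -/
abbrev MatN (k p : ℕ) := Matrix (Fin k) (Fin p) ℕ

/-- A matrix bundled with its dimensions. -/
structure CMat where
  rows : ℕ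
  cols : ℕ
  mat : MatN rows cols

/-- A matrix is simple if no two of its columns are equal. -/
def SimpleM {m n : ℕ} (A : MatN m n) : Prop :=
  ∀ j₁ j₂ : Fin n, (∀ i, A i j₁ = A i j₂) → j₁ = j₂

/-- An `r`-matrix: all entries lie in `{0, 1, …, r-1}`. -/
def RMat (r : ℕ) {m n : ℕ} (A : MatN m n) : Prop := ∀ i j, A i j < r

/-- `F` is a configuration of `A` (written `F ≺ A`): some submatrix of `A` is a row
and column permutation of `F`; equivalently there are injections of the rows and
columns of `F` into those of `A` realizing the entries of `F`. -/
def IsConfig {k p m n : ℕ} (F : MatN k p) (A : MatN m n) : Prop :=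
  ∃ f : Fin k → Fin m, ∃ g : Fin p → Fin n,
    Function.Injective f ∧ Function.Injective g ∧ ∀ i j, A (f i) (g j) = F i j

/-- `A` avoids every matrix of the family `𝓕` as a configuration. -/
def AvoidsFam {m n : ℕ} (A : MatN m n) (𝓕 : Set CMat) : Prop :=
  ∀ F ∈ 𝓕, ¬ IsConfig F.mat A

/-- `forb m r 𝓕`: the maximum number of columns of an `m`-rowed simple `r`-matrix
having no member of `𝓕` as a configuration. -/
noncomputable def forb (m r : ℕ) (𝓕 : Set CMat) : ℕ :=
  sSup { n : ℕ | ∃ A : MatN m n, RMat r A ∧ SimpleM A ∧ AvoidsFam A 𝓕 }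

/-- `forbmax m r 𝓕`: the maximum of `forb m' r 𝓕` over `m' ≤ m`. -/
noncomputable def forbmax (m r : ℕ) (𝓕 : Set CMat) : ℕ :=
  sSup { x : ℕ | ∃ m' ≤ m, x = forb m' r 𝓕 }

/-- The number of 1's in column `j` of `A` (the column sum). -/
def colSum {m n : ℕ} (A : MatN m n) (j : Fin n) : ℕ :=
  (Finset.univ.filter (fun i => A i j = 1)).card

/-- `forbK k m r 𝓕`: as `forb`, but restricted to matrices all of whose columns
have exactly `k` entries equal to 1. -/
noncomputable def forbK (k m r : ℕ) (𝓕 : Set CMat) : ℕ :=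
  sSup { n : ℕ | ∃ A : MatN m n, RMat r A ∧ SimpleM A ∧ (∀ j, colSum A j = k) ∧
    AvoidsFam A 𝓕 }

/-- `forbmaxK k m r 𝓕`: the maximum of `forbK k m' r 𝓕` over `m' ≤ m`. -/
noncomputable def forbmaxK (k m r : ℕ) (𝓕 : Set CMat) : ℕ :=
  sSup { x : ℕ | ∃ m' ≤ m, x = forbK k m' r 𝓕 }

/-- `Imat ℓ a b`: the `ℓ × ℓ` matrix with `a` on the diagonal and `b` off the diagonal. -/
def Imat (ℓ a b : ℕ) : MatN ℓ ℓ := fun i j => if i = j then a else b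

/-- `Tmat ℓ a b`: the `ℓ × ℓ` matrix with `a` below the diagonal and `b` on or above it. -/
def Tmat (ℓ a b : ℕ) : MatN ℓ ℓ := fun i j => if (j : ℕ) < (i : ℕ) then a else b

/-- `Tmat3 ℓ a b c`: the `ℓ × ℓ` matrix with `a` below, `b` on, and `c` above the diagonal. -/
def Tmat3 (ℓ a b c : ℕ) : MatN ℓ ℓ :=
  fun i j => if (j : ℕ) < (i : ℕ) then a else if i = j then b else c

/-- The family `𝒯_ℓ(r)` of all `I_ℓ(a,b)` and `T_ℓ(a,b)` with `a,b ∈ {0,…,r-1}`, `a ≠ b`. -/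
def TFam (ℓ r : ℕ) : Set CMat :=
  { M | ∃ a b : ℕ, a < r ∧ b < r ∧ a ≠ b ∧
      (M = ⟨ℓ, ℓ, Imat ℓ a b⟩ ∨ M = ⟨ℓ, ℓ, Tmat ℓ a b⟩) }

/-- `t·F`: the concatenation of `t` copies of `F` side by side. -/
def tcopies {k p : ℕ} (t : ℕ) (F : MatN k p) : MatN k (t * p) :=
  fun i j => F i ⟨(j : ℕ) % p, Nat.mod_lt _ (by
    rcases Nat.eq_zero_or_pos p with h | h
    · exact absurd j.isLt (by simp [h])
    · exact h)⟩

/-- `0×1×F`: `F` with an extra row of 0's and an extra row of 1's appended. -/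
def zeroOneTop {k p : ℕ} (F : MatN k p) : MatN (k + 2) p :=
  fun i j => if h : (i : ℕ) < k then F ⟨i, h⟩ j else if (i : ℕ) = k then 0 else 1

/-- `F_{a,b,c,d}`: the `(a+b+c+d) × 2` matrix with `a` rows `[1 1]`, `b` rows `[1 0]`,
`c` rows `[0 1]` and `d` rows `[0 0]`. -/
def Fabcd (a b c d : ℕ) : MatN (a + b + c + d) 2 :=
  fun i j =>
    if (i : ℕ) < a then 1
    else if (i : ℕ) < a + b then (if (j : ℕ) = 0 then 1 else 0)
    else if (i : ℕ) < a + b + c then (if (j : ℕ) = 0 then 0 else 1)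
    else 0

/-!
Group the columns of a simple 3-matrix `A` by the set of rows in which they have a 2. On the
other rows the columns of one class are distinct (0,1)-columns, so each class has at most
`forbmax m 2 𝓕` members, and it remains to bound the number of classes by a constant.
Among `2 ^ T` distinct sets there is a staircase: rows `x i` and sets `S j` (`i, j < T`) with
`x i ∈ S j ↔ v i` for `i < j` and `x j ∈ S j ↔ ¬ v j`. Ramsey's theorem for pairs, coloured by
`(A (x p) (c q), A (x p) (c p), A (x q) (c p))` for columns `c j` realising the `S j`, gives a
long subsequence on which `A` reads like `T_ℓ(e, d, u)` with `u = 2 ↔ d ≠ 2`. Restricting to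
`ℓ` indices, reversing the order, or taking rows and columns at alternate positions then
exhibits a member of `(𝒯_ℓ(3) \ 𝒯_ℓ(2)) ∪ {T_ℓ(0,2,1)}` in each case.
-/

open Finset

section Combinatorics

variable {α ι : Type*}

theorem exists_strictMono_colour_depends_on_left [Fintype α] [Nonempty α] [LinearOrder ι]
    (χ : ι → ι → α) :
    ∀ (t : ℕ) (S : Finset ι), (Fintype.card α + 1) ^ t ≤ #S →
      ∃ (ψ : Fin t → ι) (a : Fin t → α), StrictMono ψ ∧ (∀ p, ψ p ∈ S) ∧
        ∀ p q, p < q → χ (ψ p) (ψ q) = a p := by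
  classical
  intro t
  induction t with
  | zero => exact fun _ _ => ⟨Fin.elim0, Fin.elim0, nofun, nofun, nofun⟩
  | succ t ih =>
    intro S hS
    have hpos : 0 < (Fintype.card α + 1) ^ t := by positivity
    have hsucc : (Fintype.card α + 1) ^ (t + 1) =
        Fintype.card α * (Fintype.card α + 1) ^ t + (Fintype.card α + 1) ^ t := by ring
    have hne : S.Nonempty := card_pos.mp (by omega)
    set x := S.min' hne
    have hcard : #(univ : Finset α) * (Fintype.card α + 1) ^ t ≤ #(S.erase x) := by
      rw [card_erase_of_mem (S.min'_mem hne), card_univ]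
      omega
    obtain ⟨a, -, ha⟩ := exists_le_card_fiber_of_mul_le_card_of_maps_to
      (f := χ x) (fun _ _ => mem_univ _) univ_nonempty hcard
    obtain ⟨ψ, b, hψ, hψS, hψχ⟩ := ih _ ha
    have hψS' : ∀ p, ψ p ∈ S.erase x ∧ χ x (ψ p) = a := fun p => mem_filter.mp (hψS p)
    refine ⟨Fin.cons x ψ, Fin.cons a b, Fin.strictMono_cons.mpr ⟨fun p => ?_, hψ⟩, ?_, ?_⟩
    · exact S.min'_lt_of_mem_erase_min' hne (hψS' p).1
    · exact Fin.forall_fin_succ.mpr ⟨S.min'_mem hne, fun p => mem_of_mem_erase (hψS' p).1⟩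
    · simpa [Fin.forall_fin_succ, Fin.succ_lt_succ_iff, fun p => (hψS' p).2] using hψχ

theorem exists_strictMono_homogeneous [Fintype α] [Nonempty α] [LinearOrder ι]
    (χ : ι → ι → α) (S : Finset ι) (s : ℕ)
    (hS : (Fintype.card α + 1) ^ (Fintype.card α * s) ≤ #S) :
    ∃ (φ : Fin s → ι) (a : α), StrictMono φ ∧ ∀ p q, p < q → χ (φ p) (φ q) = a := by
  classical
  obtain ⟨ψ, b, hψ, -, hψχ⟩ := exists_strictMono_colour_depends_on_left χ _ S hS
  obtain ⟨a, ha⟩ := Fintype.exists_le_card_fiber_of_mul_le_card b (n := s) (by simp)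
  obtain ⟨P, hP, hPs⟩ := exists_subset_card_eq ha
  refine ⟨ψ ∘ P.orderEmbOfFin hPs, a, hψ.comp (P.orderEmbOfFin hPs).strictMono,
    fun p q hpq => ?_⟩
  have hb : b (P.orderEmbOfFin hPs p) = a := (mem_filter.mp (hP (P.orderEmbOfFin_mem hPs p))).2
  exact (hψχ _ _ ((P.orderEmbOfFin hPs).strictMono hpq)).trans hb

theorem exists_staircase :
    ∀ (T : ℕ) (S : Finset (ι → Bool)), 2 ^ T ≤ #S →
      ∃ (x : Fin T → ι) (f : Fin T → ι → Bool) (v : Fin T → Bool),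
        (∀ j, f j ∈ S) ∧ (∀ i j, i < j → f j (x i) = v i) ∧ ∀ j, f j (x j) = !v j := by
  classical
  intro T
  induction T with
  | zero => exact fun _ _ => ⟨Fin.elim0, Fin.elim0, Fin.elim0, nofun, nofun, nofun⟩
  | succ T ih =>
    intro S hS
    obtain ⟨g₁, hg₁, g₂, hg₂, hg⟩ := one_lt_card.mp
      (lt_of_lt_of_le (Nat.one_lt_two_pow (Nat.succ_ne_zero T)) hS)
    obtain ⟨x₀, hx₀⟩ := Function.ne_iff.mp hg
    obtain ⟨v, -, hv⟩ := exists_le_card_fiber_of_mul_le_card_of_maps_to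
      (f := fun g : ι → Bool => g x₀) (fun _ _ => mem_univ _) univ_nonempty
      (by rwa [card_univ, Fintype.card_bool, ← pow_succ'])
    obtain ⟨B, hB, hBx₀⟩ : ∃ B ∈ S, B x₀ = !v := by
      have : ∀ a b c : Bool, a ≠ b → a = !c ∨ b = !c := by decide
      rcases this _ _ v hx₀ with h' | h'
      exacts [⟨g₁, hg₁, h'⟩, ⟨g₂, hg₂, h'⟩]
    obtain ⟨x, f, w, hfS, hfx, hfxx⟩ := ih _ hv
    have hfS' : ∀ j, f j ∈ S ∧ f j x₀ = v := fun j => mem_filter.mp (hfS j)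
    refine ⟨Fin.cons x₀ x, Fin.cons B f, Fin.cons v w, ?_, ?_, ?_⟩
    · simpa [Fin.forall_fin_succ, hB] using fun j => (hfS' j).1
    · simpa [Fin.forall_fin_succ, Fin.succ_lt_succ_iff, fun j => (hfS' j).2] using hfx
    · simpa [Fin.forall_fin_succ, hBx₀] using hfxx

end Combinatorics

section Forb

variable {m n : ℕ}

theorem AvoidsFam.submatrix {k p : ℕ} {A : MatN m n} {𝓕 : Set CMat} (hA : AvoidsFam A 𝓕)
    {f : Fin k → Fin m} {g : Fin p → Fin n} (hf : Function.Injective f)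
    (hg : Function.Injective g) : AvoidsFam (A.submatrix f g) 𝓕 := by
  rintro F hF ⟨f', g', hf', hg', hA'⟩
  exact hA F hF ⟨f ∘ f', g ∘ g', hf.comp hf', hg.comp hg', hA'⟩

theorem card_le_pow_of_simpleM {r : ℕ} {A : MatN m n} (hr : RMat r A) (hs : SimpleM A) :
    n ≤ r ^ m := by
  have hinj : Function.Injective fun j i => (⟨A i j, hr i j⟩ : Fin r) :=
    fun j₁ j₂ h => hs j₁ j₂ fun i => congrArg Fin.val (congrFun h i)
  simpa using Fintype.card_le_of_injective _ hinj

theorem le_forb {r : ℕ} {𝓕 : Set CMat} {A : MatN m n} (hr : RMat r A) (hs : SimpleM A)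
    (hA : AvoidsFam A 𝓕) : n ≤ forb m r 𝓕 := by
  refine le_csSup ⟨r ^ m, ?_⟩ ⟨A, hr, hs, hA⟩
  rintro _ ⟨B, hBr, hBs, -⟩
  exact card_le_pow_of_simpleM hBr hBs

theorem forb_le_forbmax {m' r : ℕ} (𝓕 : Set CMat) (h : m' ≤ m) :
    forb m' r 𝓕 ≤ forbmax m r 𝓕 := by
  refine le_csSup (((Set.finite_Iic m).image fun m' => forb m' r 𝓕).bddAbove.mono ?_)
    ⟨m', h, rfl⟩
  rintro _ ⟨m', hm', rfl⟩
  exact ⟨m', hm', rfl⟩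

theorem avoidsFam_union {A : MatN m n} {𝓕 𝓖 : Set CMat} :
    AvoidsFam A (𝓕 ∪ 𝓖) ↔ AvoidsFam A 𝓕 ∧ AvoidsFam A 𝓖 := by
  simp only [AvoidsFam, Set.mem_union, or_imp, forall_and]

end Forb

section TFam

theorem rMat_of_mem_TFam {ℓ r : ℕ} {M : CMat} (hM : M ∈ TFam ℓ r) : RMat r M.mat := by
  rintro i j
  obtain ⟨a, b, ha, hb, -, rfl | rfl⟩ := hM
  · dsimp only [Imat]; split_ifs <;> assumption
  · dsimp only [Tmat]; split_ifs <;> assumption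

theorem Tmat3_eq_Imat (ℓ a b : ℕ) : Tmat3 ℓ b a b = Imat ℓ a b := by
  ext i j
  simp only [Tmat3, Imat]
  split_ifs <;> first | rfl | (subst_vars; omega)

theorem Tmat3_eq_Tmat (ℓ a b : ℕ) : Tmat3 ℓ a b b = Tmat ℓ a b := by
  ext i j
  simp only [Tmat3, Tmat]
  split_ifs <;> rfl

def TFamWithTwo (ℓ : ℕ) : Set CMat := (TFam ℓ 3 \ TFam ℓ 2) ∪ {⟨ℓ, ℓ, Tmat3 ℓ 0 2 1⟩}

variable {ℓ a b : ℕ}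

theorem Imat_mem_TFamWithTwo (hℓ : 2 ≤ ℓ) (ha : a < 3) (hb : b < 3) (hab : a ≠ b)
    (h2 : a = 2 ∨ b = 2) : ⟨ℓ, ℓ, Imat ℓ a b⟩ ∈ TFamWithTwo ℓ := by
  refine Or.inl ⟨⟨a, b, ha, hb, hab, Or.inl rfl⟩, fun h => ?_⟩
  have hM : RMat 2 (Imat ℓ a b) := rMat_of_mem_TFam h
  have h00 := hM ⟨0, by omega⟩ ⟨0, by omega⟩
  have h01 := hM ⟨0, by omega⟩ ⟨1, by omega⟩
  simp [Imat] at h00 h01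
  omega

theorem Tmat_mem_TFamWithTwo (hℓ : 2 ≤ ℓ) (ha : a < 3) (hb : b < 3) (hab : a ≠ b)
    (h2 : a = 2 ∨ b = 2) : ⟨ℓ, ℓ, Tmat ℓ a b⟩ ∈ TFamWithTwo ℓ := by
  refine Or.inl ⟨⟨a, b, ha, hb, hab, Or.inr rfl⟩, fun h => ?_⟩
  have hM : RMat 2 (Tmat ℓ a b) := rMat_of_mem_TFam h
  have h10 := hM ⟨1, by omega⟩ ⟨0, by omega⟩
  have h01 := hM ⟨0, by omega⟩ ⟨1, by omega⟩
  simp [Tmat] at h10 h01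
  omega

end TFam

structure Grid {m n : ℕ} (A : MatN m n) (N u d e : ℕ) where
  row : Fin N → Fin m
  col : Fin N → Fin n
  row_injective : Function.Injective row
  col_injective : Function.Injective col
  diag : ∀ p, A (row p) (col p) = d
  above : ∀ p q, p < q → A (row p) (col q) = u
  below : ∀ p q, p < q → A (row q) (col p) = e

namespace Grid

variable {m n N u d e : ℕ} {A : MatN m n}

def ofNe (row : Fin N → Fin m) (col : Fin N → Fin n) (diag : ∀ p, A (row p) (col p) = d)
    (above : ∀ p q, p < q → A (row p) (col q) = u)
    (below : ∀ p q, p < q → A (row q) (col p) = e) (hud : u ≠ d) : Grid A N u d e where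
  row := row
  col := col
  row_injective := Function.Injective.of_lt_imp_ne fun p q hpq h =>
    hud (by rw [← above p q hpq, h, diag])
  col_injective := Function.Injective.of_lt_imp_ne fun p q hpq h =>
    hud (by rw [← above p q hpq, ← h, diag])
  diag := diag
  above := above
  below := below

def rev (G : Grid A N u d e) : Grid A N e d u where
  row := G.row ∘ Fin.rev
  col := G.col ∘ Fin.rev
  row_injective := G.row_injective.comp Fin.rev_injective
  col_injective := G.col_injective.comp Fin.rev_injective
  diag _ := G.diag _
  above _ _ h := G.below _ _ (Fin.rev_lt_rev.mpr h)
  below _ _ h := G.above _ _ (Fin.rev_lt_rev.mpr h)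

def castLE {M : ℕ} (G : Grid A M u d e) (h : N ≤ M) : Grid A N u d e where
  row := G.row ∘ Fin.castLE h
  col := G.col ∘ Fin.castLE h
  row_injective := G.row_injective.comp (Fin.castLE_injective h)
  col_injective := G.col_injective.comp (Fin.castLE_injective h)
  diag _ := G.diag _
  above _ _ hpq := G.above _ _ hpq
  below _ _ hpq := G.below _ _ hpq

-- Rows at even and columns at odd positions: the new diagonal lies above the diagonal of `G`.
def interleave (G : Grid A (2 * N) u d e) : Grid A N u u e where
  row p := G.row ⟨2 * p, by omega⟩
  col p := G.col ⟨2 * p + 1, by omega⟩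
  row_injective p q h := Fin.ext (by simpa using G.row_injective h)
  col_injective p q h := Fin.ext (by simpa using G.col_injective h)
  diag p := G.above _ _ (Fin.mk_lt_mk.mpr (by omega))
  above p q hpq := G.above _ _ (Fin.mk_lt_mk.mpr (by omega))
  below p q hpq := G.below _ _ (Fin.mk_lt_mk.mpr (by omega))

theorem isConfig (G : Grid A N u d e) : IsConfig (Tmat3 N e d u) A := by
  refine ⟨G.row, G.col, G.row_injective, G.col_injective, fun p q => ?_⟩
  rcases lt_trichotomy p q with hpq | rfl | hpq
  · simp [Tmat3, G.above p q hpq, not_lt_of_gt hpq, hpq.ne]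
  · simp [Tmat3, G.diag]
  · simp [Tmat3, G.below q p hpq, Fin.lt_def.mp hpq]

theorem not_avoidsFam {ℓ : ℕ} (G : Grid A (2 * ℓ) u d e)
    (hℓ : 2 ≤ ℓ) (hu : u < 3) (hd : d < 3) (he : e < 3) (hud : u = 2 ↔ d ≠ 2) :
    ¬ AvoidsFam A (TFamWithTwo ℓ) := by
  intro hA
  have hT : ∀ {a b c}, Grid A ℓ c b a → ⟨ℓ, ℓ, Tmat3 ℓ a b c⟩ ∉ TFamWithTwo ℓ :=
    fun G' hmem => hA _ hmem G'.isConfig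
  have hG : Grid A ℓ u d e := G.castLE (by omega)
  by_cases he2 : e = 2 <;> by_cases hu2 : u = 2
  · subst he2 hu2
    refine hT hG ?_
    rw [Tmat3_eq_Imat]
    exact Imat_mem_TFamWithTwo hℓ hd (by omega) (by omega) (Or.inr rfl)
  · subst he2
    refine hT G.rev.interleave ?_
    rw [Tmat3_eq_Tmat]
    exact Tmat_mem_TFamWithTwo hℓ hu (by omega) hu2 (Or.inr rfl)
  · subst hu2
    refine hT G.interleave ?_
    rw [Tmat3_eq_Tmat]
    exact Tmat_mem_TFamWithTwo hℓ he (by omega) he2 (Or.inr rfl)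
  · obtain rfl : d = 2 := by omega
    rcases (by omega : e = u ∨ (e = 0 ∧ u = 1) ∨ (e = 1 ∧ u = 0)) with
      rfl | ⟨rfl, rfl⟩ | ⟨rfl, rfl⟩
    · refine hT hG ?_
      rw [Tmat3_eq_Imat]
      exact Imat_mem_TFamWithTwo hℓ (by omega) hu (Ne.symm hu2) (Or.inl rfl)
    · exact hT hG (Or.inr rfl)
    · exact hT hG.rev (Or.inr rfl)

end Grid

section TwoPatterns

variable {m n : ℕ}

def twoPattern (A : MatN m n) (j : Fin n) (i : Fin m) : Bool := decide (A i j = 2)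

theorem exists_grid_of_staircase {A : MatN m n} (hA : RMat 3 A) {N T : ℕ} (hN : 0 < N)
    (hT : 28 ^ (27 * (N + 1)) ≤ T) (x : Fin T → Fin m) (c : Fin T → Fin n) (v : Fin T → Bool)
    (h_lt : ∀ i j, i < j → twoPattern A (c j) (x i) = v i)
    (h_diag : ∀ j, twoPattern A (c j) (x j) = !v j) :
    ∃ u d e, u < 3 ∧ d < 3 ∧ e < 3 ∧ (u = 2 ↔ d ≠ 2) ∧ Nonempty (Grid A N u d e) := by
  let χ : Fin T → Fin T → Fin 3 × Fin 3 × Fin 3 := fun p q =>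
    (⟨A (x p) (c q), hA _ _⟩, ⟨A (x p) (c p), hA _ _⟩, ⟨A (x q) (c p), hA _ _⟩)
  obtain ⟨φ, ⟨u, d, e⟩, hφ, hχ⟩ :=
    exists_strictMono_homogeneous χ univ (N + 1) (by simpa using hT)
  have hgrid : ∀ p q, p < q → A (x (φ p)) (c (φ q)) = u ∧ A (x (φ p)) (c (φ p)) = d ∧
      A (x (φ q)) (c (φ p)) = e := by
    intro p q hpq
    simpa [χ, Prod.ext_iff, Fin.ext_iff] using hχ p q hpq
  have hud : (u : ℕ) = 2 ↔ (d : ℕ) ≠ 2 := by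
    have h0 : (0 : Fin (N + 1)) < Fin.last N := by simp [Fin.lt_def, hN]
    obtain ⟨hu, hd, -⟩ := hgrid _ _ h0
    have h_lt' := h_lt _ _ (hφ h0)
    have h_diag' := h_diag (φ 0)
    simp only [twoPattern, hu, hd] at h_lt' h_diag'
    rw [← h_lt'] at h_diag'
    by_cases hd2 : (d : ℕ) = 2 <;> simp_all
  refine ⟨u, d, e, u.isLt, d.isLt, e.isLt, hud, ⟨Grid.ofNe (x ∘ φ ∘ Fin.castSucc)
    (c ∘ φ ∘ Fin.castSucc) (fun p => (hgrid _ _ (Fin.castSucc_lt_last p)).2.1)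
    (fun p q h => (hgrid _ _ (Fin.castSucc_lt_castSucc_iff.mpr h)).1)
    (fun p q h => (hgrid _ _ (Fin.castSucc_lt_castSucc_iff.mpr h)).2.2) ?_⟩⟩
  intro h
  rw [h] at hud
  exact iff_not_self hud

theorem card_image_twoPattern_lt {ℓ : ℕ} {A : MatN m n} (hℓ : 2 ≤ ℓ) (hA3 : RMat 3 A)
    (hA : AvoidsFam A (TFamWithTwo ℓ)) :
    #(univ.image (twoPattern A)) < 2 ^ 28 ^ (27 * (2 * ℓ + 1)) := by
  by_contra! h
  obtain ⟨x, f, v, hf, h_lt, h_diag⟩ := exists_staircase _ _ h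
  choose c hc using fun j => mem_image.mp (hf j)
  obtain ⟨u, d, e, hu, hd, he, hud, ⟨G⟩⟩ := exists_grid_of_staircase hA3 (N := 2 * ℓ)
    (by omega) le_rfl x c v (by simpa only [(hc _).2] using h_lt)
    (by simpa only [(hc _).2] using h_diag)
  exact G.not_avoidsFam hℓ hu hd he hud hA

theorem card_twoPattern_fiber_le {𝓕 : Set CMat} {A : MatN m n} (hA3 : RMat 3 A)
    (hs : SimpleM A) (hA : AvoidsFam A 𝓕) (P : Fin m → Bool) :
    #(univ.filter fun j => twoPattern A j = P) ≤ forbmax m 2 𝓕 := by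
  set R := univ.filter fun i => P i = false
  set C := univ.filter fun j => twoPattern A j = P
  let er := R.orderEmbOfFin rfl
  let ec := C.orderEmbOfFin rfl
  have hR : ∀ i, P (er i) = false := fun i => (mem_filter.mp (R.orderEmbOfFin_mem rfl i)).2
  have hC : ∀ j, twoPattern A (ec j) = P := fun j =>
    (mem_filter.mp (C.orderEmbOfFin_mem rfl j)).2
  -- on the rows outside `P` a column of the class has no 2, on the rows of `P` only 2's
  have hB2 : RMat 2 (A.submatrix er ec) := fun i j => by
    have hne := congrFun (hC j) (er i)
    rw [hR] at hne
    have := hA3 (er i) (ec j)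
    simp only [twoPattern, decide_eq_false_iff_not] at hne
    simp only [Matrix.submatrix_apply]
    omega
  have hBs : SimpleM (A.submatrix er ec) := by
    intro j₁ j₂ h
    refine ec.injective (hs _ _ fun i => ?_)
    cases hi : P i
    · obtain ⟨i', rfl⟩ : i ∈ Set.range er := by
        rw [R.range_orderEmbOfFin]
        simpa [R] using hi
      exact h i'
    · have h₁ := congrFun (hC j₁) i
      have h₂ := congrFun (hC j₂) i
      simp only [twoPattern, hi, decide_eq_true_eq] at h₁ h₂
      rw [h₁, h₂]
  calc #C ≤ forb #R 2 𝓕 := le_forb hB2 hBs (hA.submatrix er.injective ec.injective)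
    _ ≤ forbmax m 2 𝓕 := forb_le_forbmax 𝓕 ((card_le_univ R).trans (by simp))

theorem card_le_of_avoidsFam {ℓ : ℕ} {𝓕 : Set CMat} {A : MatN m n} (hℓ : 2 ≤ ℓ)
    (hA3 : RMat 3 A) (hs : SimpleM A) (hA : AvoidsFam A (TFamWithTwo ℓ ∪ 𝓕)) :
    n ≤ 2 ^ 28 ^ (27 * (2 * ℓ + 1)) * forbmax m 2 𝓕 := by
  obtain ⟨hA₁, hA₂⟩ := avoidsFam_union.mp hA
  calc n = ∑ P ∈ univ.image (twoPattern A), #(univ.filter fun j => twoPattern A j = P) := by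
        simpa using card_eq_sum_card_image (twoPattern A) univ
    _ ≤ #(univ.image (twoPattern A)) * forbmax m 2 𝓕 := by
        simpa using sum_le_card_nsmul _ _ _ fun P _ => card_twoPattern_fiber_le hA3 hs hA₂ P
    _ ≤ 2 ^ 28 ^ (27 * (2 * ℓ + 1)) * forbmax m 2 𝓕 :=
        Nat.mul_le_mul_right _ (card_image_twoPattern_lt hℓ hA3 hA₁).le

end TwoPatterns

theorem stmt10_general (ℓ : ℕ) (hℓ : 2 ≤ ℓ) (𝓕 : Set CMat) :
    ∃ c : ℕ, ∀ m : ℕ, 1 ≤ m →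
      forb m 3 ((TFam ℓ 3 \ TFam ℓ 2) ∪ {⟨ℓ, ℓ, Tmat3 ℓ 0 2 1⟩} ∪ 𝓕) ≤
        c * forbmax m 2 𝓕 := by
  refine ⟨2 ^ 28 ^ (27 * (2 * ℓ + 1)), fun m _ => csSup_le' ?_⟩
  rintro n ⟨A, hA3, hs, hA⟩
  exact card_le_of_avoidsFam hℓ hA3 hs hA

/-- For `ℓ ≥ 2` and a finite family `𝓕` of (0,1)-matrices, there is a
constant `c` with `forb(m, 3, (𝒯_ℓ(3)\𝒯_ℓ(2)) ∪ {T_ℓ(0,2,1)} ∪ 𝓕) ≤ c · forbmax(m, 𝓕)`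
for all `m ≥ 1`. -/
theorem stmt10 (ℓ : ℕ) (hℓ : 2 ≤ ℓ) (𝓕 : Set CMat) (hfin : 𝓕.Finite)
    (h01 : ∀ F ∈ 𝓕, RMat 2 F.mat) :
    ∃ c : ℕ, ∀ m : ℕ, 1 ≤ m →
      forb m 3 ((TFam ℓ 3 \ TFam ℓ 2) ∪ {⟨ℓ, ℓ, Tmat3 ℓ 0 2 1⟩} ∪ 𝓕) ≤
        c * forbmax m 2 𝓕 :=
  stmt10_general ℓ hℓ 𝓕
end

section
/- Let ℓ ≥ 1 and r > s ≥ 2 be given. Then there exists an integer t (depending only on r and ℓ) with the following property. Let x ∈ {0,…,r−1} and let G be any t×t r-matrix such that every entry of G strictly below the diagonal equals x, every diagonal entry of G is different from x, and moreover, if x ∈ {0,…,s−1}, then every diagonal entry of G lies in {s,…,r−1} (the entries above the diagonal are arbitrary). Then there is a matrix F with F ≺ G such that F belongs to (𝒯_ℓ(r) \ 𝒯_ℓ(s)) ∪ { T_ℓ(x,z,u) : u ∈ {0,…,s−1}, x ∈ {0,…,s−1}, x ≠ u, z ∈ {s,…,r−1} }. -/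
/-!
A Ramsey argument: pigeonholing the diagonal, and then repeatedly taking the least remaining
index and keeping the largest colour class of its row, shows that a large enough `t × t`
`r`-matrix has a principal `2ℓ × 2ℓ` submatrix with constant diagonal `y` and constant entries
`u` above the diagonal. Below the diagonal it is `x`, so the submatrix is `T_{2ℓ}(x,y,u)`.
If `u = x` it contains `I_ℓ(y,x)`; if `x, u < s` it contains `T_ℓ(x,y,u)`; otherwise the even
rows and odd columns form `T_ℓ(x,u)`. Since `y ≠ x` and `x < s` forces `y ≥ s`, the chosen
matrix has an entry at least `s`, which keeps it out of `𝒯_ℓ(s)` (for `ℓ = 1` one takes that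
entry alone).
-/

open Finset

theorem exists_strictMono_upper_eq_of_pow_le {α : Type*} [LinearOrder α] {r : ℕ} (hr : 2 ≤ r)
    (c : α → α → ℕ) (hc : ∀ a b, c a b < r) (m : ℕ) (S : Finset α) (hS : r ^ m ≤ #S) :
    ∃ a : Fin m → α, StrictMono a ∧ (∀ i, a i ∈ S) ∧
      ∃ d : Fin m → ℕ, (∀ i, d i < r) ∧ ∀ i j, i < j → c (a i) (a j) = d i := by
  induction m generalizing S with
  | zero =>
    exact ⟨Fin.elim0, fun i => i.elim0, fun i => i.elim0, Fin.elim0, fun i => i.elim0,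
      fun i => i.elim0⟩
  | succ m ih =>
    have hne : S.Nonempty := card_pos.mp (lt_of_lt_of_le (by positivity) hS)
    set a₀ := S.min' hne
    have hbound : r * (r ^ m - 1) < #(S.erase a₀) := by
      have hpow : r * (r ^ m - 1) = r ^ (m + 1) - r := by rw [Nat.mul_sub_one, pow_succ']
      have hr_le : r ≤ r ^ (m + 1) := Nat.le_self_pow (by omega) r
      rw [card_erase_of_mem (S.min'_mem hne)]
      omega
    obtain ⟨v, hv, hfiber⟩ := exists_lt_card_fiber_of_mul_lt_card_of_maps_to
      (t := range r) (f := c a₀) (fun b _ => mem_range.mpr (hc a₀ b))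
      (by rwa [card_range])
    obtain ⟨a, ha, haS, d, hd, hcol⟩ := ih {b ∈ S.erase a₀ | c a₀ b = v} (by omega)
    have hmem : ∀ i, a i ∈ S.erase a₀ ∧ c a₀ (a i) = v := fun i => mem_filter.mp (haS i)
    refine ⟨Fin.cons a₀ a,
      Fin.strictMono_cons.mpr ⟨fun i => S.min'_lt_of_mem_erase_min' hne (hmem i).1, ha⟩,
      Fin.cases (S.min'_mem hne) (fun i => mem_of_mem_erase (hmem i).1),
      Fin.cons v d, Fin.cases (mem_range.mp hv) hd, fun i j hij => ?_⟩
    cases j using Fin.cases with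
    | zero => exact absurd hij (Fin.not_lt_zero i)
    | succ j =>
      cases i using Fin.cases with
      | zero => simpa using (hmem j).2
      | succ i => simpa using hcol i j (Fin.succ_lt_succ_iff.mp hij)

theorem exists_strictMono_diag_eq_upper_eq {r : ℕ} (hr : 2 ≤ r) (n : ℕ)
    (G : MatN (r ^ (r * n + 1)) (r ^ (r * n + 1))) (hG : RMat r G) :
    ∃ e : Fin n → Fin (r ^ (r * n + 1)), StrictMono e ∧ ∃ y u : ℕ,
      (∀ i, G (e i) (e i) = y) ∧ ∀ i j, i < j → G (e i) (e j) = u := by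
  have hrange : (range r).Nonempty := nonempty_range_iff.mpr (by omega)
  obtain ⟨y, -, hy⟩ := exists_le_card_fiber_of_mul_le_card_of_maps_to (s := univ)
    (f := fun i => G i i) (n := r ^ (r * n)) (fun i _ => mem_range.mpr (hG i i)) hrange
    (by simp [pow_succ'])
  obtain ⟨a, ha, haS, d, hd, hcol⟩ := exists_strictMono_upper_eq_of_pow_le hr G hG _ _ hy
  obtain ⟨u, -, hu⟩ := exists_le_card_fiber_of_mul_le_card_of_maps_to (s := univ) (f := d)
    (n := n) (fun i _ => mem_range.mpr (hd i)) hrange (by simp)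
  set b := orderEmbOfCardLe _ hu
  refine ⟨a ∘ b, ha.comp b.strictMono, y, u, fun i => (mem_filter.mp (haS (b i))).2,
    fun i j hij => ?_⟩
  rw [Function.comp_apply, Function.comp_apply, hcol _ _ (b.strictMono hij)]
  exact (mem_filter.mp (orderEmbOfCardLe_mem _ hu i)).2

theorem IsConfig.trans {k p m n a b : ℕ} {F : MatN k p} {A : MatN m n} {B : MatN a b}
    (hFA : IsConfig F A) (hAB : IsConfig A B) : IsConfig F B := by
  obtain ⟨f, g, hf, hg, hFA⟩ := hFA
  obtain ⟨f', g', hf', hg', hAB⟩ := hAB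
  exact ⟨f' ∘ f, g' ∘ g, hf'.comp hf, hg'.comp hg, fun i j => (hAB _ _).trans (hFA i j)⟩

theorem isConfig_Imat_one {m n : ℕ} (A : MatN m n) (i : Fin m) (j : Fin n) (b : ℕ) :
    IsConfig (Imat 1 (A i j) b) A :=
  ⟨fun _ => i, fun _ => j, Function.injective_of_subsingleton _,
    Function.injective_of_subsingleton _, fun i' j' => by simp [Imat, Subsingleton.elim i' j']⟩

theorem isConfig_Tmat3_of_strictMono {t n x y u : ℕ} {G : MatN t t} {e : Fin n → Fin t}
    (he : StrictMono e) (hbelow : ∀ i j : Fin t, (j : ℕ) < (i : ℕ) → G i j = x)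
    (hdiag : ∀ i, G (e i) (e i) = y) (hupper : ∀ i j, i < j → G (e i) (e j) = u) :
    IsConfig (Tmat3 n x y u) G := by
  refine ⟨e, e, he.injective, he.injective, fun i j => ?_⟩
  rcases lt_trichotomy j i with hji | rfl | hij
  · simp [Tmat3, hbelow _ _ (he hji), Fin.lt_def.mp hji]
  · simp [Tmat3, hdiag]
  · simp [Tmat3, hupper _ _ hij, hij.ne, not_lt.mpr hij.le]

theorem Imat_eq_Tmat3 (ℓ a b : ℕ) : Imat ℓ b a = Tmat3 ℓ a b a := by
  ext i j
  by_cases hij : i = j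
  · simp [Imat, Tmat3, hij]
  · simp [Imat, Tmat3, hij]

theorem isConfig_Tmat3_of_le {ℓ n : ℕ} (h : ℓ ≤ n) (a b c : ℕ) :
    IsConfig (Tmat3 ℓ a b c) (Tmat3 n a b c) :=
  ⟨Fin.castLE h, Fin.castLE h, Fin.castLE_injective h, Fin.castLE_injective h,
    fun i j => by simp [Tmat3, Fin.ext_iff]⟩

theorem isConfig_Tmat_Tmat3 (ℓ a b c : ℕ) : IsConfig (Tmat ℓ a c) (Tmat3 (2 * ℓ) a b c) := by
  refine ⟨fun i => ⟨2 * i, by omega⟩, fun j => ⟨2 * j + 1, by omega⟩,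
    fun i i' h => Fin.ext (by simpa using h), fun j j' h => Fin.ext (by simpa using h),
    fun i j => ?_⟩
  rcases Nat.lt_or_ge (j : ℕ) i with hji | hij
  · simp [Tmat3, Tmat, hji, show 2 * (j : ℕ) + 1 < 2 * i by omega]
  · simp [Tmat3, Tmat, not_lt.mpr hij, show ¬ 2 * (j : ℕ) + 1 < 2 * i by omega,
      show 2 * (i : ℕ) ≠ 2 * j + 1 by omega]

theorem lt_of_mem_TFam {ℓ s : ℕ} {M : MatN ℓ ℓ} (hM : (⟨ℓ, ℓ, M⟩ : CMat) ∈ TFam ℓ s)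
    (i j : Fin ℓ) : M i j < s := by
  obtain ⟨a, b, ha, hb, -, h | h⟩ := hM <;>
  · simp only [CMat.mk.injEq, heq_eq_eq, true_and] at h
    subst h
    simp only [Imat, Tmat]
    split_ifs <;> assumption

theorem notMem_TFam_of_le {ℓ s : ℕ} {M : MatN ℓ ℓ} (i j : Fin ℓ) (h : s ≤ M i j) :
    (⟨ℓ, ℓ, M⟩ : CMat) ∉ TFam ℓ s :=
  fun hM => (lt_of_mem_TFam hM i j).not_ge h

theorem exists_isConfig_one_of_le {m n r s : ℕ} (hs : 0 < s) (A : MatN m n) (i : Fin m)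
    (j : Fin n) (hsA : s ≤ A i j) (hAr : A i j < r) :
    ∃ F : CMat, F ∈ TFam 1 r \ TFam 1 s ∧ IsConfig F.mat A :=
  ⟨⟨1, 1, Imat 1 (A i j) 0⟩, ⟨⟨A i j, 0, hAr, by omega, by omega, Or.inl rfl⟩,
    notMem_TFam_of_le 0 0 (by simpa [Imat] using hsA)⟩, isConfig_Imat_one A i j 0⟩

theorem exists_isConfig_Tmat3 {ℓ r s x y u : ℕ} (hℓ : 1 ≤ ℓ) (hs : 0 < s) (hx : x < r)
    (hy : y < r) (hu : u < r) (hyx : y ≠ x) (hsy : x < s → s ≤ y) :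
    ∃ F : CMat,
      (F ∈ TFam ℓ r \ TFam ℓ s ∨
        ∃ z u : ℕ, x < s ∧ u < s ∧ x ≠ u ∧ s ≤ z ∧ z < r ∧ F = ⟨ℓ, ℓ, Tmat3 ℓ x z u⟩) ∧
      IsConfig F.mat (Tmat3 (2 * ℓ) x y u) := by
  obtain rfl | hℓ2 : ℓ = 1 ∨ 2 ≤ ℓ := by omega
  · by_cases hsx : s ≤ x
    · obtain ⟨F, hF, hFc⟩ := exists_isConfig_one_of_le hs (Tmat3 (2 * 1) x y u) 1 0 hsx hx
      exact ⟨F, Or.inl hF, hFc⟩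
    · obtain ⟨F, hF, hFc⟩ :=
        exists_isConfig_one_of_le hs (Tmat3 (2 * 1) x y u) 0 0 (hsy (by omega)) hy
      exact ⟨F, Or.inl hF, hFc⟩
  have hℓle : ℓ ≤ 2 * ℓ := by omega
  by_cases hux : u = x
  · subst hux
    refine ⟨⟨ℓ, ℓ, Imat ℓ y u⟩, Or.inl ⟨⟨y, u, hy, hu, hyx, Or.inl rfl⟩, ?_⟩, ?_⟩
    · by_cases hsy' : s ≤ y
      · exact notMem_TFam_of_le ⟨0, by omega⟩ ⟨0, by omega⟩ (by simpa [Imat] using hsy')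
      · exact notMem_TFam_of_le ⟨1, by omega⟩ ⟨0, by omega⟩ (by simp [Imat]; omega)
    · rw [Imat_eq_Tmat3]
      exact isConfig_Tmat3_of_le hℓle _ _ _
  by_cases hsmall : x < s ∧ u < s
  · exact ⟨_, Or.inr ⟨y, u, hsmall.1, hsmall.2, Ne.symm hux, hsy hsmall.1, hy, rfl⟩,
      isConfig_Tmat3_of_le hℓle _ _ _⟩
  refine ⟨⟨ℓ, ℓ, Tmat ℓ x u⟩, Or.inl ⟨⟨x, u, hx, hu, Ne.symm hux, Or.inr rfl⟩, ?_⟩,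
    isConfig_Tmat_Tmat3 ℓ x y u⟩
  by_cases hsx : s ≤ x
  · exact notMem_TFam_of_le ⟨1, by omega⟩ ⟨0, by omega⟩ (by simpa [Tmat] using hsx)
  · exact notMem_TFam_of_le ⟨0, by omega⟩ ⟨0, by omega⟩ (by simp [Tmat]; omega)

/-- For `ℓ ≥ 1` and `r > s ≥ 2` there is `t` (depending only on `r`, `ℓ`)
such that any `t×t` `r`-matrix `G` with all entries strictly below the diagonal equal
to some `x < r`, all diagonal entries different from `x`, and (when `x < s`) all
diagonal entries in `{s,…,r-1}`, contains as a configuration some member of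
`(𝒯_ℓ(r) \ 𝒯_ℓ(s)) ∪ {T_ℓ(x,z,u) : x,u ∈ {0,…,s-1}, x ≠ u, z ∈ {s,…,r-1}}`. -/
theorem stmt11 (ℓ r s : ℕ) (hℓ : 1 ≤ ℓ) (hs : 2 ≤ s) (hrs : s < r) :
    ∃ t : ℕ, ∀ x : ℕ, x < r →
      ∀ G : MatN t t, RMat r G →
        (∀ i j : Fin t, (j : ℕ) < (i : ℕ) → G i j = x) →
        (∀ i : Fin t, G i i ≠ x) →
        (x < s → ∀ i : Fin t, s ≤ G i i) →
        ∃ F : CMat,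
          (F ∈ TFam ℓ r \ TFam ℓ s ∨
            ∃ z u : ℕ, x < s ∧ u < s ∧ x ≠ u ∧ s ≤ z ∧ z < r ∧
              F = ⟨ℓ, ℓ, Tmat3 ℓ x z u⟩) ∧
          IsConfig F.mat G := by
  refine ⟨r ^ (r * (2 * ℓ) + 1), fun x hx G hG hbelow hdiagx hdiags => ?_⟩
  obtain ⟨e, he, y, u, hdiag, hupper⟩ := exists_strictMono_diag_eq_upper_eq (by omega) _ G hG
  let i₀ : Fin (2 * ℓ) := ⟨0, by omega⟩
  let i₁ : Fin (2 * ℓ) := ⟨1, by omega⟩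
  have hy : y < r := hdiag i₀ ▸ hG _ _
  have hu : u < r := hupper i₀ i₁ (Fin.mk_lt_mk.mpr Nat.one_pos) ▸ hG _ _
  have hyx : y ≠ x := hdiag i₀ ▸ hdiagx _
  have hsy : x < s → s ≤ y := fun hxs => hdiag i₀ ▸ hdiags hxs _
  obtain ⟨F, hF, hFc⟩ := exists_isConfig_Tmat3 hℓ (by omega) hx hy hu hyx hsy
  exact ⟨F, hF, hFc.trans (isConfig_Tmat3_of_strictMono he hbelow hdiag hupper)⟩
end
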